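/- Let 𝒮 ⊆ 𝓑(M) be a distinguished set of abstract boundary points, let A ⊆ M be a singularly compact set, and let σ : [0, b) → M (0 < b ≤ ∞) be a continuous curve whose image is contained in A. If σ is not partially imprisoned in any compact set (for every compact K ⊆ M there is t₀ ∈ [0, b) with σ(t) ∉ K for all t > t₀), then for every singular neighborhood U there exists t_U ∈ [0, b) such that σ(t) ∈ U for all t > t_U; consequently, for every sequence (tₙ) in [0, b) with tₙ → b, the sequence (σ(tₙ)) has an accumulation point in (M̄, 𝒯_sap) belonging to 𝒮. -/

import Mathlib

open scoped Manifold
open Set Filter Topology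

universe u

/-- An *envelopment* of a manifold `M` (modelled on `I`): a smooth embedding of `M` into a
smooth manifold of the same dimension (same model), whose target is Hausdorff, connected and
paracompact; being an embedding of equidimensional manifolds, its image is open. -/
structure Envelopment {E H : Type u} [NormedAddCommGroup E] [NormedSpace ℝ E]
    [TopologicalSpace H] (I : ModelWithCorners ℝ E H)
    (M : Type u) [TopologicalSpace M] [ChartedSpace H M] : Type (u + 1) where
  carrier : Type u
  [ts : TopologicalSpace carrier]
  [t2 : T2Space carrier]
  [conn : ConnectedSpace carrier]
  [pc : ParacompactSpace carrier]
  [cs : ChartedSpace H carrier]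
  [sm : IsManifold I (⊤ : ℕ∞) carrier]
  map : M → carrier
  smooth : ContMDiff I I (⊤ : ℕ∞) map
  immersion : ∀ x : M, Function.Injective (mfderiv I I map x)
  emb : IsOpenEmbedding map

attribute [instance] Envelopment.ts Envelopment.t2 Envelopment.conn Envelopment.pc
  Envelopment.cs Envelopment.sm

variable {E H : Type u} [NormedAddCommGroup E] [NormedSpace ℝ E] [TopologicalSpace H]
variable {I : ModelWithCorners ℝ E H}
variable {M : Type u} [TopologicalSpace M] [ChartedSpace H M]

/-- A *boundary set*: a nonempty subset of the topological boundary `∂φ(M)` of the image of an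
envelopment `φ`. -/
structure BoundarySet {E H : Type u} [NormedAddCommGroup E] [NormedSpace ℝ E]
    [TopologicalSpace H] (I : ModelWithCorners ℝ E H)
    (M : Type u) [TopologicalSpace M] [ChartedSpace H M] : Type (u + 1) where
  env : Envelopment I M
  set : Set env.carrier
  nonempty : set.Nonempty
  subset_frontier : set ⊆ frontier (Set.range env.map)

/-- `B` covers `B'` (written `B ▷ B'`): for every open neighbourhood `N` of `B` there is an
open neighbourhood `N'` of `B'` with `φ(φ'⁻¹(N' ∩ φ'(M))) ⊆ N`. -/
def Covers (B B' : BoundarySet I M) : Prop :=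
  ∀ N : Set B.env.carrier, IsOpen N → B.set ⊆ N →
    ∃ N' : Set B'.env.carrier, IsOpen N' ∧ B'.set ⊆ N' ∧
      B.env.map '' (B'.env.map ⁻¹' N') ⊆ N

theorem covers_refl (B : BoundarySet I M) : Covers B B :=
  fun N hN hBN => ⟨N, hN, hBN, Set.image_preimage_subset _ _⟩

theorem covers_trans {B B' B'' : BoundarySet I M} (h : Covers B B') (h' : Covers B' B'') :
    Covers B B'' := by
  intro N hN hBN
  obtain ⟨N', hN', hB'N', hsub⟩ := h N hN hBN
  obtain ⟨N'', hN'', hB''N'', hsub'⟩ := h' N' hN' hB'N'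
  refine ⟨N'', hN'', hB''N'', ?_⟩
  rintro x ⟨m, hm, rfl⟩
  exact hsub ⟨m, hsub' ⟨m, hm, rfl⟩, rfl⟩

/-- Boundary sets are equivalent when each covers the other. -/
def bsSetoid {E H : Type u} [NormedAddCommGroup E] [NormedSpace ℝ E]
    [TopologicalSpace H] (I : ModelWithCorners ℝ E H)
    (M : Type u) [TopologicalSpace M] [ChartedSpace H M] : Setoid (BoundarySet I M) where
  r B B' := Covers B B' ∧ Covers B' B
  iseqv := ⟨fun B => ⟨covers_refl B, covers_refl B⟩, fun h => ⟨h.2, h.1⟩,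
    fun h h' => ⟨covers_trans h.1 h'.1, covers_trans h'.2 h.2⟩⟩

/-- An equivalence class of boundary sets is an *abstract boundary point* when it has a
singleton representative under some envelopment. -/
def IsAbstractPoint (q : Quotient (bsSetoid I M)) : Prop :=
  ∃ B : BoundarySet I M, Quotient.mk (bsSetoid I M) B = q ∧ ∃ p, B.set = {p}

/-- The abstract boundary `𝓑(M)`: all abstract boundary points. -/
def AbstractBoundary {E H : Type u} [NormedAddCommGroup E] [NormedSpace ℝ E]
    [TopologicalSpace H] (I : ModelWithCorners ℝ E H)
    (M : Type u) [TopologicalSpace M] [ChartedSpace H M] :=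
  {q : Quotient (bsSetoid I M) // IsAbstractPoint q}

/-- The singleton boundary set `{p}` at a boundary point `p` of an envelopment. -/
def singletonBS (e : Envelopment I M) {p : e.carrier}
    (hp : p ∈ frontier (Set.range e.map)) : BoundarySet I M :=
  ⟨e, {p}, Set.singleton_nonempty p, Set.singleton_subset_iff.mpr hp⟩

/-- The abstract boundary point `[p]` determined by a boundary point `p` of an envelopment. -/
def absOf (e : Envelopment I M) {p : e.carrier}
    (hp : p ∈ frontier (Set.range e.map)) : AbstractBoundary I M :=
  ⟨Quotient.mk (bsSetoid I M) (singletonBS e hp), singletonBS e hp, rfl, p, rfl⟩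

/-- A boundary set `B ⊆ ∂φ(M)` is *strongly attached* to an open `U ⊆ M` when some open
`N ⊇ B` satisfies `N ∩ φ(M) ⊆ φ(U)`. -/
def StronglyAttached (B : BoundarySet I M) (U : Set M) : Prop :=
  ∃ N : Set B.env.carrier, IsOpen N ∧ B.set ⊆ N ∧
    N ∩ Set.range B.env.map ⊆ B.env.map '' U

/-- An abstract boundary point is strongly attached to `U` when its representatives are. -/
def AbsStronglyAttached (x : AbstractBoundary I M) (U : Set M) : Prop :=
  ∀ B : BoundarySet I M, Quotient.mk (bsSetoid I M) B = x.1 → StronglyAttached B U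

/-- `𝓑_U`: the set of abstract boundary points strongly attached to `U`. -/
def absAttachedSet (I : ModelWithCorners ℝ E H) (M : Type u) [TopologicalSpace M]
    [ChartedSpace H M] (U : Set M) : Set (AbstractBoundary I M) :=
  {x | AbsStronglyAttached x U}

/-- `M̄ = M ∪ 𝓑(M)`. -/
def Mbar {E H : Type u} [NormedAddCommGroup E] [NormedSpace ℝ E]
    [TopologicalSpace H] (I : ModelWithCorners ℝ E H)
    (M : Type u) [TopologicalSpace M] [ChartedSpace H M] :=
  M ⊕ AbstractBoundary I M

/-- The strongly attached point topology `𝒯_sap` on `M̄`, generated by the basis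
`{U ∪ 𝓑_U : U ⊆ M open}`. -/
instance : TopologicalSpace (Mbar I M) :=
  TopologicalSpace.generateFrom
    {s | ∃ U : Set M, IsOpen U ∧
      s = Sum.inl '' U ∪ Sum.inr '' absAttachedSet I M U}

/-- An open `U ⊆ M` is a *singular neighbourhood* (w.r.t. a distinguished set `𝒮` of abstract
boundary points) when every point of `𝒮` is strongly attached to `U`. -/
def SingularNbhd (𝒮 : Set (AbstractBoundary I M)) (U : Set M) : Prop :=
  IsOpen U ∧ ∀ x ∈ 𝒮, AbsStronglyAttached x U

/-- A closed `A ⊆ M` is *singularly compact* when `A \ U` is compact for every singular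
neighbourhood `U`. -/
def SingularlyCompact (𝒮 : Set (AbstractBoundary I M)) (A : Set M) : Prop :=
  IsClosed A ∧ ∀ U : Set M, SingularNbhd 𝒮 U → IsCompact (A \ U)

/-- Inclusion of `M` into `M̄`. -/
def Mbar.ofM {E H : Type u} [NormedAddCommGroup E] [NormedSpace ℝ E]
    [TopologicalSpace H] {I : ModelWithCorners ℝ E H}
    {M : Type u} [TopologicalSpace M] [ChartedSpace H M] (p : M) : Mbar I M :=
  Sum.inl p

/-- Inclusion of the abstract boundary `𝓑(M)` into `M̄`. -/
def Mbar.ofB {E H : Type u} [NormedAddCommGroup E] [NormedSpace ℝ E]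
    [TopologicalSpace H] {I : ModelWithCorners ℝ E H}
    {M : Type u} [TopologicalSpace M] [ChartedSpace H M] (x : AbstractBoundary I M) :
    Mbar I M :=
  Sum.inr x

/-! Since `A \ U` is compact for a singular neighbourhood `U`, a curve in `A` that is not
partially imprisoned eventually stays in `U`. If no point `x ∈ 𝒮` were an accumulation point
of `σ(tₙ)`, each would have a basic neighbourhood `U_x ∪ 𝓑_{U_x}` missing the sequence; the union
of the `U_x` is then a singular neighbourhood that the sequence never meets, although it
eventually lies in it. -/

theorem AbsStronglyAttached.mono {x : AbstractBoundary I M} {U V : Set M}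
    (h : AbsStronglyAttached x U) (hUV : U ⊆ V) : AbsStronglyAttached x V := fun B hB =>
  let ⟨N, hN, hBN, hNU⟩ := h B hB
  ⟨N, hN, hBN, hNU.trans (image_mono hUV)⟩

theorem AbsStronglyAttached.inter {x : AbstractBoundary I M} {U V : Set M}
    (hU : AbsStronglyAttached x U) (hV : AbsStronglyAttached x V) :
    AbsStronglyAttached x (U ∩ V) := by
  intro B hB
  obtain ⟨N, hN, hBN, hNU⟩ := hU B hB
  obtain ⟨N', hN', hBN', hN'V⟩ := hV B hB
  refine ⟨N ∩ N', hN.inter hN', subset_inter hBN hBN', ?_⟩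
  rw [image_inter B.env.emb.injective]
  rintro z ⟨⟨hzN, hzN'⟩, hz⟩
  exact ⟨hNU ⟨hzN, hz⟩, hN'V ⟨hzN', hz⟩⟩

theorem absStronglyAttached_univ (x : AbstractBoundary I M) : AbsStronglyAttached x univ :=
  fun B _ => ⟨univ, isOpen_univ, subset_univ _, by
    rw [image_univ]
    exact inter_subset_right⟩

theorem absAttachedSet_inter (U V : Set M) :
    absAttachedSet I M (U ∩ V) = absAttachedSet I M U ∩ absAttachedSet I M V :=
  Subset.antisymm (fun _ hx => ⟨hx.mono inter_subset_left, hx.mono inter_subset_right⟩)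
    fun _ hx => hx.1.inter hx.2

theorem absAttachedSet_univ : absAttachedSet I M univ = univ :=
  eq_univ_of_forall absStronglyAttached_univ

theorem Set.image_inl_union_image_inr_inter {α β : Type*} (U V : Set α) (P Q : Set β) :
    (Sum.inl '' U ∪ Sum.inr '' P) ∩ (Sum.inl '' V ∪ Sum.inr '' Q) =
      (Sum.inl '' (U ∩ V) ∪ Sum.inr '' (P ∩ Q) : Set (α ⊕ β)) := by
  ext (a | b) <;> simp

theorem Mbar.isTopologicalBasis : TopologicalSpace.IsTopologicalBasis
    {s : Set (Mbar I M) | ∃ U : Set M, IsOpen U ∧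
      s = Sum.inl '' U ∪ Sum.inr '' absAttachedSet I M U} := by
  refine TopologicalSpace.isTopologicalBasis_of_subbasis_of_finiteInter rfl ⟨?_, ?_⟩
  · refine ⟨univ, isOpen_univ, ?_⟩
    rw [absAttachedSet_univ, image_univ, image_univ]
    exact range_inl_union_range_inr.symm
  · rintro _ ⟨U, hU, rfl⟩ _ ⟨V, hV, rfl⟩
    refine ⟨U ∩ V, hU.inter hV, ?_⟩
    rw [absAttachedSet_inter]
    exact image_inl_union_image_inr_inter U V _ _

theorem Mbar.accPt_ofB {x : AbstractBoundary I M} {s : Set M}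
    (h : ∀ U : Set M, IsOpen U → AbsStronglyAttached x U → (U ∩ s).Nonempty) :
    AccPt (Mbar.ofB x) (𝓟 (Mbar.ofM '' s)) := by
  rw [accPt_iff_nhds]
  intro W hW
  obtain ⟨_, ⟨U, hU, rfl⟩, hxU, hUW⟩ := Mbar.isTopologicalBasis.mem_nhds_iff.mp hW
  change Sum.inr x ∈ (Sum.inl '' U ∪ Sum.inr '' _ : Set (M ⊕ AbstractBoundary I M)) at hxU
  obtain ⟨p, hpU, hps⟩ := h U hU (by simpa [absAttachedSet] using hxU)
  exact ⟨Mbar.ofM p, ⟨hUW (Or.inl ⟨p, hpU, rfl⟩), p, hps, rfl⟩, Sum.inl_ne_inr⟩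

theorem singularNbhd_biUnion {𝒮 : Set (AbstractBoundary I M)}
    {U : AbstractBoundary I M → Set M} (hU : ∀ x ∈ 𝒮, IsOpen (U x))
    (hxU : ∀ x ∈ 𝒮, AbsStronglyAttached x (U x)) : SingularNbhd 𝒮 (⋃ x ∈ 𝒮, U x) :=
  ⟨isOpen_biUnion hU, fun x hx => (hxU x hx).mono (subset_biUnion_of_mem hx)⟩

theorem exists_mem_accPt_of_forall_singularNbhd {𝒮 : Set (AbstractBoundary I M)} {s : Set M}
    (h : ∀ U : Set M, SingularNbhd 𝒮 U → (U ∩ s).Nonempty) :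
    ∃ x ∈ 𝒮, AccPt (Mbar.ofB x) (𝓟 (Mbar.ofM '' s)) := by
  by_contra! hnone
  have hsep : ∀ x ∈ 𝒮, ∃ U : Set M, IsOpen U ∧ AbsStronglyAttached x U ∧ U ∩ s = ∅ := by
    intro x hx
    by_contra! hU
    exact hnone x hx (Mbar.accPt_ofB hU)
  choose! U hUo hxU hUs using hsep
  obtain ⟨p, hpU, hps⟩ := h _ (singularNbhd_biUnion hUo hxU)
  obtain ⟨x, hx, hpx⟩ := mem_iUnion₂.mp hpU
  exact (hUs x hx).subset ⟨hpx, hps⟩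

theorem curve_not_partially_imprisoned_acc_singularity_general
    {E H : Type u} [NormedAddCommGroup E] [NormedSpace ℝ E] [TopologicalSpace H]
    {I : ModelWithCorners ℝ E H} {M : Type u} [TopologicalSpace M] [ChartedSpace H M]
    (𝒮 : Set (AbstractBoundary I M)) (A : Set M) (hA : SingularlyCompact 𝒮 A)
    (b : EReal) (σ : ℝ → M)
    (himg : ∀ t : ℝ, 0 ≤ t → (t : EReal) < b → σ t ∈ A)
    (himp : ∀ K : Set M, IsCompact K → ∃ t₀ : ℝ, 0 ≤ t₀ ∧ (t₀ : EReal) < b ∧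
        ∀ t : ℝ, t₀ < t → (t : EReal) < b → σ t ∉ K) :
    (∀ U : Set M, SingularNbhd 𝒮 U →
        ∃ tU : ℝ, 0 ≤ tU ∧ (tU : EReal) < b ∧
          ∀ t : ℝ, tU < t → (t : EReal) < b → σ t ∈ U) ∧
      ∀ tn : ℕ → ℝ, (∀ n, 0 ≤ tn n ∧ ((tn n : ℝ) : EReal) < b) →
        Filter.Tendsto (fun n => ((tn n : ℝ) : EReal)) Filter.atTop (nhds b) →
        ∃ x ∈ 𝒮, AccPt (Mbar.ofB x)
          (Filter.principal (Mbar.ofM '' Set.range (fun n => σ (tn n)))) := by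
  have heventually : ∀ U : Set M, SingularNbhd 𝒮 U →
      ∃ tU : ℝ, 0 ≤ tU ∧ (tU : EReal) < b ∧ ∀ t : ℝ, tU < t → (t : EReal) < b → σ t ∈ U := by
    intro U hU
    obtain ⟨t₀, ht₀, ht₀b, hout⟩ := himp (A \ U) (hA.2 U hU)
    refine ⟨t₀, ht₀, ht₀b, fun t ht htb => ?_⟩
    by_contra hσU
    exact hout t ht htb ⟨himg t (ht₀.trans ht.le) htb, hσU⟩
  refine ⟨heventually, fun tn htn hlim => exists_mem_accPt_of_forall_singularNbhd fun U hU => ?_⟩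
  obtain ⟨tU, -, htUb, hσU⟩ := heventually U hU
  obtain ⟨n, hn⟩ := (hlim.eventually (eventually_gt_nhds htUb)).exists
  exact ⟨σ (tn n), hσU _ (EReal.coe_lt_coe_iff.mp hn) (htn n).2, n, rfl⟩

/-- If a continuous curve `σ : [0, b) → M` whose image lies in a singularly compact set `A` is
not partially imprisoned in any compact set, then for every singular neighbourhood `U` there is
`t_U ∈ [0, b)` with `σ(t) ∈ U` for all `t > t_U`; consequently, for every sequence `tₙ → b` in
`[0, b)`, the sequence `σ(tₙ)` has an accumulation point in `(M̄, 𝒯_sap)` belonging to `𝒮`. -/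
theorem curve_not_partially_imprisoned_acc_singularity
    {E H : Type u} [NormedAddCommGroup E] [NormedSpace ℝ E] [TopologicalSpace H]
    {I : ModelWithCorners ℝ E H} {M : Type u} [TopologicalSpace M] [ChartedSpace H M]
    [IsManifold I (⊤ : ℕ∞) M] [T2Space M] [ConnectedSpace M] [ParacompactSpace M]
    (𝒮 : Set (AbstractBoundary I M)) (A : Set M) (hA : SingularlyCompact 𝒮 A)
    (b : EReal) (hb : 0 < b) (σ : ℝ → M)
    (hσ : ContinuousOn σ {t : ℝ | 0 ≤ t ∧ (t : EReal) < b})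
    (himg : ∀ t : ℝ, 0 ≤ t → (t : EReal) < b → σ t ∈ A)
    (himp : ∀ K : Set M, IsCompact K → ∃ t₀ : ℝ, 0 ≤ t₀ ∧ (t₀ : EReal) < b ∧
        ∀ t : ℝ, t₀ < t → (t : EReal) < b → σ t ∉ K) :
    (∀ U : Set M, SingularNbhd 𝒮 U →
        ∃ tU : ℝ, 0 ≤ tU ∧ (tU : EReal) < b ∧
          ∀ t : ℝ, tU < t → (t : EReal) < b → σ t ∈ U) ∧
      ∀ tn : ℕ → ℝ, (∀ n, 0 ≤ tn n ∧ ((tn n : ℝ) : EReal) < b) →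
        Filter.Tendsto (fun n => ((tn n : ℝ) : EReal)) Filter.atTop (nhds b) →
        ∃ x ∈ 𝒮, AccPt (Mbar.ofB x)
          (Filter.principal (Mbar.ofM '' Set.range (fun n => σ (tn n)))) :=
  curve_not_partially_imprisoned_acc_singularity_general 𝒮 A hA b σ himg himp
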